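/- arXiv:2508.08057 — 6 statements merged into one kernel-verified Lean document; each statement's English description precedes it below -/
import Mathlib

section
/- Let L be a 3-Lie algebra over ℂ in which every 1/3-derivation is a scalar multiple of the identity map. Then every transposed Poisson structure on L is trivial, i.e., any commutative associative multiplication · making (L, ·, [·,·,·]) a transposed Poisson 3-Lie algebra satisfies x·y·[u,v,w] = 0 for all elements (in particular, if the bracket is nonzero the multiplication of any two elements acts as zero on brackets; concretely, each multiplication operator R_z is a scalar λ(z)·id and the resulting structure is given by scalar multiplications). -/
/-- If every 1/3-derivation of a 3-Lie algebra `L` over ℂ is a scalar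
multiple of the identity, then every transposed Poisson structure on `L` is trivial:
each multiplication operator `R_z` is a scalar, and products of two elements
annihilate all brackets. -/
theorem transposed_poisson_trivial_of_trivial_one_third_derivations
    {L : Type*} [AddCommGroup L] [Module ℂ L]
    (br : L →ₗ[ℂ] L →ₗ[ℂ] L →ₗ[ℂ] L)
    (halt1 : ∀ x y, br x x y = 0)
    (halt2 : ∀ x y, br x y y = 0)
    (halt3 : ∀ x y, br x y x = 0)
    (hfund : ∀ x y u v w, br x y (br u v w) =
      br (br x y u) v w + br u (br x y v) w + br u v (br x y w))
    (hder : ∀ φ : L →ₗ[ℂ] L,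
      (∀ x y z, φ (br x y z) =
        (3⁻¹ : ℂ) • (br (φ x) y z + br x (φ y) z + br x y (φ z))) →
      ∃ c : ℂ, ∀ v, φ v = c • v)
    (mul : L →ₗ[ℂ] L →ₗ[ℂ] L)
    (hcomm : ∀ x y, mul x y = mul y x)
    (hassoc : ∀ x y z, mul (mul x y) z = mul x (mul y z))
    (hcompat : ∀ u x y z, (3 : ℂ) • mul u (br x y z) =
      br (mul u x) y z + br x (mul u y) z + br x y (mul u z)) :
    (∀ z, ∃ c : ℂ, ∀ y, mul z y = c • y) ∧
    (∀ x y u v w, mul (mul x y) (br u v w) = 0) := by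
  have key : ∀ z : L, ∃ c : ℂ, ∀ y, mul z y = c • y := by
    intro z
    apply hder (mul z)
    intro x y u
    rw [← hcompat z x y u, smul_smul]
    norm_num
  refine ⟨key, ?_⟩
  intro x y u v w
  choose c hc using key
  have ht : mul (mul x y) (br u v w) = (c x * c y) • br u v w := by
    rw [hc x y, map_smul, LinearMap.smul_apply, hc y, smul_smul]
  by_cases hb : br u v w = 0
  · rw [ht, hb, smul_zero]
  · have hvne : v ≠ 0 := by
      intro h
      apply hb
      rw [h]
      simp
    have h2 : c v • br u v w = 0 := by
      have e : c v • u = c u • v := by rw [← hc u v, ← hc v u, hcomm]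
      have h3 : br (c v • u) v w = br (c u • v) v w := by rw [e]
      simpa [halt1] using h3
    have hcv : c v = 0 := (smul_eq_zero.mp h2).resolve_right hb
    have h1 : c x • v = c v • x := by rw [← hc x v, ← hc v x, hcomm]
    rw [hcv, zero_smul] at h1
    have hcx : c x = 0 := (smul_eq_zero.mp h1).resolve_right hvne
    rw [ht, hcx, zero_mul, zero_smul]
end

section
/- Let G be an abelian group, L = ⨁_{g∈G} L_g a finitely generated G-graded 3-Lie algebra over ℂ, and V = ⨁_{g∈G} V_g a G-graded L-module. Then the space of 1/3-derivations from L to V decomposes as Der_{1/3}(L,V) = ⨁_{g∈G} Der_{1/3}(L,V)_g, where Der_{1/3}(L,V)_g consists of 1/3-derivations φ with φ(L_h) ⊆ V_{g+h} for all h ∈ G. -/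
open DirectSum

open DirectSum

section aux

variable {G : Type*} [DecidableEq G] {M : Type*} [AddCommGroup M] [Module ℂ M]
variable (p : G → Submodule ℂ M)

/-- The decomposition equivalence of an internal direct sum. -/
noncomputable def decAux (hp : DirectSum.IsInternal p) : M ≃ₗ[ℂ] ⨁ g, p g :=
  (LinearEquiv.ofBijective (DirectSum.coeLinearMap p) hp).symm

/-- Projection onto the `g`-th component. -/
noncomputable def projAux (hp : DirectSum.IsInternal p) (g : G) : M →ₗ[ℂ] M :=
  (p g).subtype ∘ₗ (DFinsupp.lapply g) ∘ₗ (decAux p hp).toLinearMap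

theorem projAux_apply (hp : DirectSum.IsInternal p) (g : G) (v : M) :
    projAux p hp g v = ((decAux p hp v) g : M) := rfl

theorem projAux_mem (hp : DirectSum.IsInternal p) (g : G) (v : M) :
    projAux p hp g v ∈ p g := ((decAux p hp v) g).2

theorem projAux_of_mem (hp : DirectSum.IsInternal p) {g : G} {v : M} (hv : v ∈ p g) :
    projAux p hp g v = v := by
  rw [projAux_apply]
  have := hp.ofBijective_coeLinearMap_of_mem hv
  rw [decAux, this]

theorem projAux_of_ne (hp : DirectSum.IsInternal p) {g h : G} {v : M} (hv : v ∈ p h)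
    (hne : h ≠ g) : projAux p hp g v = 0 := by
  rw [projAux_apply]
  have := hp.ofBijective_coeLinearMap_of_mem_ne hne hv
  rw [decAux, this]
  rfl

theorem projAux_of_not_support (hp : DirectSum.IsInternal p) {g : G} {v : M}
    [∀ (i : G) (x : p i), Decidable (x ≠ 0)]
    (h : g ∉ (decAux p hp v).support) : projAux p hp g v = 0 := by
  rw [projAux_apply]
  rw [DFinsupp.notMem_support_iff.mp h]
  rfl

theorem sum_projAux (hp : DirectSum.IsInternal p)
    [∀ (i : G) (x : p i), Decidable (x ≠ 0)] (v : M) :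
    ∑ m ∈ (decAux p hp v).support, projAux p hp m v = v := by
  have hsymm : ∀ d : ⨁ g, p g, (decAux p hp).symm d = DirectSum.coeLinearMap p d := fun _ => rfl
  calc ∑ m ∈ (decAux p hp v).support, projAux p hp m v
      = ∑ m ∈ (decAux p hp v).support,
          DirectSum.coeLinearMap p (DirectSum.of (fun g => p g) m ((decAux p hp v) m)) := by
        refine Finset.sum_congr rfl fun m _ => ?_
        rw [projAux_apply, DirectSum.coeLinearMap_of]
    _ = DirectSum.coeLinearMap p (∑ m ∈ (decAux p hp v).support,
          DirectSum.of (fun g => p g) m ((decAux p hp v) m)) := (map_sum _ _ _).symm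
    _ = DirectSum.coeLinearMap p (decAux p hp v) := by rw [DirectSum.sum_support_of]
    _ = v := by rw [← hsymm, (decAux p hp).symm_apply_apply]

theorem ext_aux (hp : DirectSum.IsInternal p) {N : Type*} [AddCommGroup N] [Module ℂ N]
    (f f' : M →ₗ[ℂ] N) (h : ∀ k : G, ∀ x ∈ p k, f x = f' x) : f = f' := by
  ext x
  have hx : x ∈ ⨆ g, p g := hp.submodule_iSup_eq_top ▸ Submodule.mem_top
  refine Submodule.iSup_induction p (motive := fun x => f x = f' x) hx h (by simp) ?_
  intro a b ha hb
  simp [map_add, ha, hb]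

end aux



/-- For a finitely generated `G`-graded 3-Lie algebra `L` over ℂ and a
`G`-graded `L`-module `V`, the space of 1/3-derivations `Der_{1/3}(L,V)` decomposes as
the (internal) direct sum of its homogeneous components `Der_{1/3}(L,V)_g`. -/
theorem one_third_derivations_graded_decomposition
    {G : Type*} [AddCommGroup G] [DecidableEq G]
    {L : Type*} [AddCommGroup L] [Module ℂ L]
    {V : Type*} [AddCommGroup V] [Module ℂ V]
    (br : L →ₗ[ℂ] L →ₗ[ℂ] L →ₗ[ℂ] L)
    (ρ : L →ₗ[ℂ] L →ₗ[ℂ] V →ₗ[ℂ] V)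
    (halt1 : ∀ x y, br x x y = 0)
    (halt2 : ∀ x y, br x y y = 0)
    (halt3 : ∀ x y, br x y x = 0)
    (hfund : ∀ x y u v w, br x y (br u v w) =
      br (br x y u) v w + br u (br x y v) w + br u v (br x y w))
    (Lg : G → Submodule ℂ L) (Vg : G → Submodule ℂ V)
    (hL : DirectSum.IsInternal Lg) (hV : DirectSum.IsInternal Vg)
    (hbrgr : ∀ g h k : G, ∀ x ∈ Lg g, ∀ y ∈ Lg h, ∀ z ∈ Lg k,
      br x y z ∈ Lg (g + h + k))
    (hρgr : ∀ g h k : G, ∀ x ∈ Lg g, ∀ y ∈ Lg h, ∀ v ∈ Vg k,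
      ρ x y v ∈ Vg (g + h + k))
    (hfg : ∃ S : Finset L, ∀ p : Submodule ℂ L, ↑S ⊆ (p : Set L) →
      (∀ x ∈ p, ∀ y ∈ p, ∀ z ∈ p, br x y z ∈ p) → p = ⊤)
    (Der : Submodule ℂ (L →ₗ[ℂ] V))
    (hDer : ∀ φ : L →ₗ[ℂ] V, φ ∈ Der ↔ ∀ x y z, φ (br x y z) =
      (3⁻¹ : ℂ) • (ρ y z (φ x) + ρ z x (φ y) + ρ x y (φ z)))
    (DerG : G → Submodule ℂ (L →ₗ[ℂ] V))
    (hDerG : ∀ (g : G) (φ : L →ₗ[ℂ] V), φ ∈ DerG g ↔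
      (φ ∈ Der ∧ ∀ h : G, ∀ x ∈ Lg h, φ x ∈ Vg (g + h))) :
    (⨆ g, DerG g) = Der ∧ iSupIndep DerG := by
  classical
  obtain ⟨S, hS⟩ := hfg
  -- the `g`-th component of a linear map
  set comp : G → (L →ₗ[ℂ] V) → (L →ₗ[ℂ] V) := fun g φ =>
    (DirectSum.toModule ℂ G V (fun h => projAux Vg hV (g + h) ∘ₗ φ ∘ₗ (Lg h).subtype)) ∘ₗ
      (decAux Lg hL).toLinearMap with hcomp
  have comp_apply : ∀ (g : G) (φ : L →ₗ[ℂ] V) (h : G) (x : L), x ∈ Lg h →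
      comp g φ x = projAux Vg hV (g + h) (φ x) := by
    intro g φ h x hx
    have hdec : decAux Lg hL x = DirectSum.lof ℂ G (fun h => Lg h) h ⟨x, hx⟩ := by
      rw [decAux, LinearEquiv.symm_apply_eq, LinearEquiv.ofBijective_apply (f := DirectSum.coeLinearMap Lg) (hf := hL),
        DirectSum.lof_eq_of, DirectSum.coeLinearMap_of]
    rw [hcomp]
    simp only [LinearMap.coe_comp, Function.comp_apply, LinearEquiv.coe_coe]
    rw [hdec, DirectSum.toModule_lof]
    rfl
  have comp_mem : ∀ (g : G) (φ : L →ₗ[ℂ] V) (h : G) (x : L), x ∈ Lg h →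
      comp g φ x ∈ Vg (g + h) := by
    intro g φ h x hx
    rw [comp_apply g φ h x hx]
    exact projAux_mem Vg hV _ _
  -- the projections commute with the action of homogeneous elements
  have rho_proj : ∀ (a b m : G) (y z : L), y ∈ Lg a → z ∈ Lg b → ∀ v : V,
      projAux Vg hV (a + b + m) (ρ y z v) = ρ y z (projAux Vg hV m v) := by
    intro a b m y z hy hz v
    have hmaps : projAux Vg hV (a + b + m) ∘ₗ (ρ y z) = (ρ y z) ∘ₗ projAux Vg hV m := by
      refine ext_aux Vg hV _ _ ?_
      intro k w hw
      simp only [LinearMap.coe_comp, Function.comp_apply]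
      by_cases hk : k = m
      · subst hk
        rw [projAux_of_mem Vg hV (hρgr a b k y hy z hz w hw), projAux_of_mem Vg hV hw]
      · rw [projAux_of_ne Vg hV (hρgr a b k y hy z hz w hw)
            (fun hc => hk (add_left_cancel hc)),
          projAux_of_ne Vg hV hw hk, map_zero]
    exact LinearMap.congr_fun hmaps v
  -- components of derivations are derivations
  have comp_der : ∀ (g : G) (φ : L →ₗ[ℂ] V), φ ∈ Der → comp g φ ∈ Der := by
    intro g φ hφ
    rw [hDer]
    have hφ' := (hDer φ).mp hφ
    -- triple induction on homogeneous elements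
    intro x y z
    have hx : x ∈ ⨆ h, Lg h := hL.submodule_iSup_eq_top ▸ Submodule.mem_top
    refine Submodule.iSup_induction (x := x) Lg (motive := fun x => comp g φ (br x y z) =
      (3⁻¹ : ℂ) • (ρ y z (comp g φ x) + ρ z x (comp g φ y) + ρ x y (comp g φ z)))
      hx ?_ ?_ ?_
    · intro a x hxa
      have hy : y ∈ ⨆ h, Lg h := hL.submodule_iSup_eq_top ▸ Submodule.mem_top
      refine Submodule.iSup_induction (x := y) Lg (motive := fun y => comp g φ (br x y z) =
        (3⁻¹ : ℂ) • (ρ y z (comp g φ x) + ρ z x (comp g φ y) + ρ x y (comp g φ z)))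
        hy ?_ ?_ ?_
      · intro b y hyb
        have hz : z ∈ ⨆ h, Lg h := hL.submodule_iSup_eq_top ▸ Submodule.mem_top
        refine Submodule.iSup_induction (x := z) Lg (motive := fun z => comp g φ (br x y z) =
          (3⁻¹ : ℂ) • (ρ y z (comp g φ x) + ρ z x (comp g φ y) + ρ x y (comp g φ z)))
          hz ?_ ?_ ?_
        · intro c z hzc
          have hbr : br x y z ∈ Lg (a + b + c) := hbrgr a b c x hxa y hyb z hzc
          have hψx : comp g φ x = projAux Vg hV (g + a) (φ x) := comp_apply g φ a x hxa
          have hψy : comp g φ y = projAux Vg hV (g + b) (φ y) := comp_apply g φ b y hyb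
          have hψz : comp g φ z = projAux Vg hV (g + c) (φ z) := comp_apply g φ c z hzc
          have t1 : projAux Vg hV (g + (a + b + c)) (ρ y z (φ x)) = ρ y z (comp g φ x) := by
            rw [show g + (a + b + c) = b + c + (g + a) by abel,
              rho_proj b c (g + a) y z hyb hzc, hψx]
          have t2 : projAux Vg hV (g + (a + b + c)) (ρ z x (φ y)) = ρ z x (comp g φ y) := by
            rw [show g + (a + b + c) = c + a + (g + b) by abel,
              rho_proj c a (g + b) z x hzc hxa, hψy]
          have t3 : projAux Vg hV (g + (a + b + c)) (ρ x y (φ z)) = ρ x y (comp g φ z) := by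
            rw [show g + (a + b + c) = a + b + (g + c) by abel,
              rho_proj a b (g + c) x y hxa hyb, hψz]
          rw [comp_apply g φ (a + b + c) (br x y z) hbr, hφ' x y z, map_smul, map_add, map_add,
            t1, t2, t3]
        · simp
        · intro z₁ z₂ h₁ h₂
          simp only [map_add, LinearMap.add_apply] at h₁ h₂ ⊢
          rw [h₁, h₂, ← smul_add]
          congr 1
          abel
      · simp
      · intro y₁ y₂ h₁ h₂
        simp only [map_add, LinearMap.add_apply] at h₁ h₂ ⊢
        rw [h₁, h₂, ← smul_add]
        congr 1
        abel
    · simp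
    · intro x₁ x₂ h₁ h₂
      simp only [map_add, LinearMap.add_apply] at h₁ h₂ ⊢
      rw [h₁, h₂, ← smul_add]
      congr 1
      abel
  have comp_memDerG : ∀ (g : G) (φ : L →ₗ[ℂ] V), φ ∈ Der → comp g φ ∈ DerG g := by
    intro g φ hφ
    exact (hDerG g _).mpr ⟨comp_der g φ hφ, fun h x hx => comp_mem g φ h x hx⟩
  constructor
  · -- ⨆ g, DerG g = Der
    apply le_antisymm
    · exact iSup_le fun g φ hφ => ((hDerG g φ).mp hφ).1
    · intro φ hφ
      -- finitely many nonzero components, supported on T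
      set T : Finset G := S.biUnion (fun s => (decAux Lg hL s).support.biUnion
        (fun h => (decAux Vg hV (φ (projAux Lg hL h s))).support.image (fun m => m - h)))
        with hT
      have comp_zero : ∀ g : G, g ∉ T → comp g φ = 0 := by
        intro g hg
        have hker : ∀ s ∈ S, comp g φ s = 0 := by
          intro s hs
          have hsum := sum_projAux Lg hL s
          rw [← hsum, map_sum]
          refine Finset.sum_eq_zero fun h hh => ?_
          rw [comp_apply g φ h _ (projAux_mem Lg hL h s)]
          by_contra hne
          have hmem : (g + h) ∈ (decAux Vg hV (φ (projAux Lg hL h s))).support := by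
            by_contra h'
            exact hne (projAux_of_not_support Vg hV h')
          exact hg (Finset.mem_biUnion.mpr ⟨s, hs, Finset.mem_biUnion.mpr
            ⟨h, hh, Finset.mem_image.mpr ⟨g + h, hmem, by abel⟩⟩⟩)
        have hkertop : LinearMap.ker (comp g φ) = ⊤ := by
          refine hS _ ?_ ?_
          · intro s hs
            exact LinearMap.mem_ker.mpr (hker s hs)
          · intro x hx y hy z hz
            have hd := (hDer _).mp (comp_der g φ hφ) x y z
            rw [LinearMap.mem_ker] at hx hy hz ⊢
            rw [hd, hx, hy, hz]
            simp
        exact LinearMap.ker_eq_top.mp hkertop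
      -- φ is the sum of its components over T
      have φ_eq : φ = ∑ g ∈ T, comp g φ := by
        refine ext_aux Lg hL _ _ ?_
        intro h x hx
        rw [LinearMap.sum_apply]
        have hcomps : ∀ g ∈ T, comp g φ x = projAux Vg hV (g + h) (φ x) :=
          fun g _ => comp_apply g φ h x hx
        rw [Finset.sum_congr rfl hcomps]
        set w := φ x with hw
        set F : Finset G := T.image (· + h) with hF
        have himg : ∑ g ∈ T, projAux Vg hV (g + h) w = ∑ m ∈ F, projAux Vg hV m w := by
          rw [hF, Finset.sum_image (fun a _ b _ hab => by
            exact add_right_cancel hab)]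
        rw [himg]
        have key : ∀ m : G, m ∉ F → m ∈ (decAux Vg hV w).support → projAux Vg hV m w = 0 := by
          intro m hmF hmsupp
          have : m - h ∉ T := by
            intro hc
            exact hmF (Finset.mem_image.mpr ⟨m - h, hc, by abel⟩)
          have hz := comp_zero (m - h) this
          have hval : projAux Vg hV (m - h + h) (φ x) = 0 := by
            have h2 := comp_apply (m - h) φ h x hx
            rw [hz] at h2
            exact h2.symm.trans (by simp)
          rw [hw, show m = m - h + h by abel]
          exact hval
        have key2 : ∀ m : G, m ∈ F → m ∉ (decAux Vg hV w).support → projAux Vg hV m w = 0 :=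
          fun m _ hm => projAux_of_not_support Vg hV hm
        have h1 : ∑ m ∈ F, projAux Vg hV m w
            = ∑ m ∈ F ∪ (decAux Vg hV w).support, projAux Vg hV m w := by
          refine Finset.sum_subset Finset.subset_union_left ?_
          intro m hm hmF
          rcases Finset.mem_union.mp hm with h' | h'
          · exact absurd h' hmF
          · exact key m hmF h'
        have h2 : ∑ m ∈ (decAux Vg hV w).support, projAux Vg hV m w
            = ∑ m ∈ F ∪ (decAux Vg hV w).support, projAux Vg hV m w := by
          refine Finset.sum_subset Finset.subset_union_right ?_
          intro m hm hms
          rcases Finset.mem_union.mp hm with h' | h'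
          · exact key2 m h' hms
          · exact absurd h' hms
        rw [h1, ← h2, sum_projAux Vg hV w]
      rw [φ_eq]
      exact Submodule.sum_mem _ fun g _ =>
        Submodule.mem_iSup_of_mem g (comp_memDerG g φ hφ)
  · -- independence
    intro g
    rw [disjoint_iff]
    rw [Submodule.eq_bot_iff]
    intro φ hφ
    obtain ⟨hφg, hφrest⟩ := Submodule.mem_inf.mp hφ
    have hmain : ∀ k : G, ∀ x ∈ Lg k, projAux Vg hV (g + k) (φ x) = 0 := by
      have : ∀ ψ ∈ (⨆ (h) (_ : h ≠ g), DerG h), ∀ k : G, ∀ x ∈ Lg k,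
          projAux Vg hV (g + k) (ψ x) = 0 := by
        intro ψ hψ
        refine Submodule.iSup_induction (fun h => ⨆ (_ : h ≠ g), DerG h)
          (motive := fun ψ => ∀ k : G, ∀ x ∈ Lg k, projAux Vg hV (g + k) (ψ x) = 0) hψ ?_ ?_ ?_
        · intro h ψ' hψ'
          by_cases hhg : h = g
          · have hbot : (⨆ (_ : h ≠ g), DerG h) ≤ ⊥ := iSup_le fun hne => absurd hhg hne
            have hz := Submodule.mem_bot (R := ℂ) |>.mp (hbot hψ')
            subst hz
            intro k x hx
            simp
          · have hle : (⨆ (_ : h ≠ g), DerG h) ≤ DerG h := iSup_le fun _ => le_rfl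
            have hψ'' := hle hψ'
            intro k x hx
            have hmem := ((hDerG h ψ').mp hψ'').2 k x hx
            exact projAux_of_ne Vg hV hmem (by
              intro hc
              exact hhg (add_right_cancel hc))
        · intro k x hx
          simp
        · intro ψ₁ ψ₂ h₁ h₂ k x hx
          simp only [LinearMap.add_apply, map_add, h₁ k x hx, h₂ k x hx, add_zero]
      exact this φ hφrest
    have hzero : φ = 0 := by
      refine ext_aux Lg hL _ _ ?_
      intro k x hx
      have hmem := ((hDerG g φ).mp hφg).2 k x hx
      have := hmain k x hx
      rw [projAux_of_mem Vg hV hmem] at this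
      simpa using this
    exact hzero
end

section
/- The bracket defined on the ℂ-vector space with basis {L_r, M_r : r ∈ ℤ} by [L_r, L_s, M_t] = (s−r)L_{r+s+t}, [L_r, M_s, M_t] = (s−t)M_{r+s+t}, [L_r, L_s, L_t] = [M_r, M_s, M_t] = 0 (extended alternating-trilinearly) satisfies the fundamental identity of a 3-Lie algebra: [x,y,[u,v,w]] = [[x,y,u],v,w] + [u,[x,y,v],w] + [u,v,[x,y,w]] for all basis elements. -/
/-- The underlying space of `A_ω^δ`: formal ℂ-linear combinations of basis
elements indexed by `Bool × ℤ` (`(false, r)` is `L_r`, `(true, r)` is `M_r`). -/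
abbrev Aod : Type := (Bool × ℤ) →₀ ℂ

/-- Basis element `L_r`. -/
noncomputable def Lb (r : ℤ) : Aod := Finsupp.single (false, r) 1
/-- Basis element `M_r`. -/
noncomputable def Mb (r : ℤ) : Aod := Finsupp.single (true, r) 1

/-- Structure constants of `A_ω^δ`: the alternating trilinear extension of
`[L_r,L_s,M_t] = (s-r) L_{r+s+t}`, `[L_r,M_s,M_t] = (s-t) M_{r+s+t}`,
`[L_r,L_s,L_t] = [M_r,M_s,M_t] = 0`. -/
noncomputable def sc : Bool × ℤ → Bool × ℤ → Bool × ℤ → Aod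
  | (false, r), (false, s), (true, t) => ((s - r : ℤ) : ℂ) • Lb (r + s + t)
  | (false, r), (true, s), (false, t) => ((r - t : ℤ) : ℂ) • Lb (r + s + t)
  | (true, r), (false, s), (false, t) => ((t - s : ℤ) : ℂ) • Lb (r + s + t)
  | (false, r), (true, s), (true, t) => ((s - t : ℤ) : ℂ) • Mb (r + s + t)
  | (true, r), (false, s), (true, t) => ((t - r : ℤ) : ℂ) • Mb (r + s + t)
  | (true, r), (true, s), (false, t) => ((r - s : ℤ) : ℂ) • Mb (r + s + t)
  | _, _, _ => 0

/-- The 3-Lie bracket of `A_ω^δ`, extended trilinearly from the structure constants. -/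
noncomputable def br (x y z : Aod) : Aod :=
  x.sum fun a ca => y.sum fun b cb => z.sum fun c cc => (ca * cb * cc) • sc a b c

lemma brz1 (y z : Aod) : br 0 y z = 0 := by simp [br]
lemma brz2 (x z : Aod) : br x 0 z = 0 := by simp [br]
lemma brz3 (x y : Aod) : br x y 0 = 0 := by simp [br]

lemma bra1 (x x' y z : Aod) : br (x + x') y z = br x y z + br x' y z := by
  simp [br, Finsupp.sum_add_index', add_mul, add_smul, Finsupp.sum_add]
lemma bra2 (x y y' z : Aod) : br x (y + y') z = br x y z + br x y' z := by
  simp [br, Finsupp.sum_add_index', add_mul, mul_add, add_smul, Finsupp.sum_add]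
lemma bra3 (x y z z' : Aod) : br x y (z + z') = br x y z + br x y z' := by
  simp [br, Finsupp.sum_add_index', mul_add, add_smul, Finsupp.sum_add]

lemma brs1 (c : ℂ) (x y z : Aod) : br (c • x) y z = c • br x y z := by
  simp [br, Finsupp.sum_smul_index', Finsupp.smul_sum, mul_assoc, mul_smul]
lemma brs2 (c : ℂ) (x y z : Aod) : br x (c • y) z = c • br x y z := by
  simp [br, Finsupp.sum_smul_index', Finsupp.smul_sum, smul_smul, mul_assoc, mul_left_comm, mul_comm]
lemma brs3 (c : ℂ) (x y z : Aod) : br x y (c • z) = c • br x y z := by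
  simp [br, Finsupp.sum_smul_index', Finsupp.smul_sum, smul_smul, mul_assoc, mul_left_comm, mul_comm]

lemma br_single (a b c : Bool × ℤ) :
    br (Finsupp.single a 1) (Finsupp.single b 1) (Finsupp.single c 1) = sc a b c := by
  simp [br, Finsupp.sum_single_index]

lemma brsub1 (x x' y z : Aod) : br (x - x') y z = br x y z - br x' y z := by
  rw [sub_eq_add_neg, sub_eq_add_neg, ← neg_one_smul ℂ x', bra1, brs1, neg_one_smul]
lemma brsub2 (x y y' z : Aod) : br x (y - y') z = br x y z - br x y' z := by
  rw [sub_eq_add_neg, sub_eq_add_neg, ← neg_one_smul ℂ y', bra2, brs2, neg_one_smul]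
lemma brsub3 (x y z z' : Aod) : br x y (z - z') = br x y z - br x y z' := by
  rw [sub_eq_add_neg, sub_eq_add_neg, ← neg_one_smul ℂ z', bra3, brs3, neg_one_smul]

lemma brc1 (c : ℂ) (a : Bool × ℤ) (y z : Aod) :
    br (Finsupp.single a c) y z = c • br (Finsupp.single a 1) y z := by
  rw [← brs1, Finsupp.smul_single, smul_eq_mul, mul_one]
lemma brc2 (c : ℂ) (a : Bool × ℤ) (x z : Aod) :
    br x (Finsupp.single a c) z = c • br x (Finsupp.single a 1) z := by
  rw [← brs2, Finsupp.smul_single, smul_eq_mul, mul_one]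
lemma brc3 (c : ℂ) (a : Bool × ℤ) (x y : Aod) :
    br x y (Finsupp.single a c) = c • br x y (Finsupp.single a 1) := by
  rw [← brs3, Finsupp.smul_single, smul_eq_mul, mul_one]

set_option maxHeartbeats 2000000 in
lemma key (a b u v w : Bool × ℤ) :
    br (Finsupp.single a 1) (Finsupp.single b 1) (sc u v w) =
      br (sc a b u) (Finsupp.single v 1) (Finsupp.single w 1)
      + br (Finsupp.single u 1) (sc a b v) (Finsupp.single w 1)
      + br (Finsupp.single u 1) (Finsupp.single v 1) (sc a b w) := by
  obtain ⟨p, r⟩ := a; obtain ⟨q, s⟩ := b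
  obtain ⟨e1, t1⟩ := u; obtain ⟨e2, t2⟩ := v; obtain ⟨e3, t3⟩ := w
  cases p <;> cases q <;> cases e1 <;> cases e2 <;> cases e3 <;>
    simp only [sc, Lb, Mb, brs1, brs2, brs3, br_single, brz1, brz2, brz3, smul_smul,
      smul_zero] <;>
    first
      | (simp; done)
      | (ext ⟨bb, nn⟩
         rcases bb <;>
           simp only [Finsupp.smul_apply, Finsupp.add_apply, Finsupp.coe_add, Pi.add_apply,
             Finsupp.coe_zero, Pi.zero_apply, Finsupp.single_apply, Prod.mk.injEq,
             smul_eq_mul, mul_ite, mul_one, mul_zero, eq_self_iff_true, true_and,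
             Bool.false_eq_true, Bool.true_eq_false, false_and, if_false, ite_false] <;>
           (try split_ifs) <;> push_cast <;> first | ring1 | omega)

lemma lin_ext {f g : Aod → Aod}
    (hfa : ∀ a b, f (a + b) = f a + f b) (hfs : ∀ (c : ℂ) a, f (c • a) = c • f a)
    (hga : ∀ a b, g (a + b) = g a + g b) (hgs : ∀ (c : ℂ) a, g (c • a) = c • g a)
    (h : ∀ p, f (Finsupp.single p 1) = g (Finsupp.single p 1)) : ∀ x, f x = g x := by
  intro x
  induction x using Finsupp.induction_linear with
  | zero =>
    rw [show (0 : Aod) = (0 : ℂ) • (0 : Aod) by simp, hfs, hgs, zero_smul, zero_smul]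
  | add a b ha hb => rw [hfa, hga, ha, hb]
  | single p c =>
    rw [show Finsupp.single p c = c • Finsupp.single p 1 by
      simp [Finsupp.smul_single], hfs, hgs, h]

/-- The bracket of `A_ω^δ` satisfies the fundamental (Filippov)
identity of a 3-Lie algebra. -/
theorem Aod_fundamental_identity :
    ∀ x y u v w : Aod, br x y (br u v w) =
      br (br x y u) v w + br u (br x y v) w + br u v (br x y w) := by
  have key' : ∀ a b u v w : Bool × ℤ,
      br (Finsupp.single a 1) (Finsupp.single b 1)
        (br (Finsupp.single u 1) (Finsupp.single v 1) (Finsupp.single w 1)) =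
      br (br (Finsupp.single a 1) (Finsupp.single b 1) (Finsupp.single u 1))
          (Finsupp.single v 1) (Finsupp.single w 1)
        + br (Finsupp.single u 1)
            (br (Finsupp.single a 1) (Finsupp.single b 1) (Finsupp.single v 1))
            (Finsupp.single w 1)
        + br (Finsupp.single u 1) (Finsupp.single v 1)
            (br (Finsupp.single a 1) (Finsupp.single b 1) (Finsupp.single w 1)) := by
    intro a b u v w
    rw [br_single, br_single, br_single, br_single]
    exact key a b u v w
  intro x y u v w
  refine lin_ext (f := fun x => br x y (br u v w))
      (g := fun x => br (br x y u) v w + br u (br x y v) w + br u v (br x y w))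
      (fun a b => by simp only [bra1, bra2, bra3]; try abel)
      (fun c a => by simp only [brs1, brs2, brs3, smul_add])
      (fun a b => by simp only [bra1, bra2, bra3]; try abel)
      (fun c a => by simp only [brs1, brs2, brs3, smul_add]) (fun p1 => ?_) x
  refine lin_ext (f := fun y => br (Finsupp.single p1 1) y (br u v w))
      (g := fun y => br (br (Finsupp.single p1 1) y u) v w
        + br u (br (Finsupp.single p1 1) y v) w + br u v (br (Finsupp.single p1 1) y w))
      (fun a b => by simp only [bra1, bra2, bra3]; try abel)
      (fun c a => by simp only [brs1, brs2, brs3, smul_add])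
      (fun a b => by simp only [bra1, bra2, bra3]; try abel)
      (fun c a => by simp only [brs1, brs2, brs3, smul_add]) (fun p2 => ?_) y
  refine lin_ext (f := fun u => br (Finsupp.single p1 1) (Finsupp.single p2 1) (br u v w))
      (g := fun u => br (br (Finsupp.single p1 1) (Finsupp.single p2 1) u) v w
        + br u (br (Finsupp.single p1 1) (Finsupp.single p2 1) v) w
        + br u v (br (Finsupp.single p1 1) (Finsupp.single p2 1) w))
      (fun a b => by simp only [bra1, bra2, bra3]; try abel)
      (fun c a => by simp only [brs1, brs2, brs3, smul_add])
      (fun a b => by simp only [bra1, bra2, bra3]; try abel)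
      (fun c a => by simp only [brs1, brs2, brs3, smul_add]) (fun p3 => ?_) u
  refine lin_ext
      (f := fun v => br (Finsupp.single p1 1) (Finsupp.single p2 1)
        (br (Finsupp.single p3 1) v w))
      (g := fun v => br (br (Finsupp.single p1 1) (Finsupp.single p2 1) (Finsupp.single p3 1)) v w
        + br (Finsupp.single p3 1) (br (Finsupp.single p1 1) (Finsupp.single p2 1) v) w
        + br (Finsupp.single p3 1) v (br (Finsupp.single p1 1) (Finsupp.single p2 1) w))
      (fun a b => by simp only [bra1, bra2, bra3]; try abel)
      (fun c a => by simp only [brs1, brs2, brs3, smul_add])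
      (fun a b => by simp only [bra1, bra2, bra3]; try abel)
      (fun c a => by simp only [brs1, brs2, brs3, smul_add]) (fun p4 => ?_) v
  refine lin_ext
      (f := fun w => br (Finsupp.single p1 1) (Finsupp.single p2 1)
        (br (Finsupp.single p3 1) (Finsupp.single p4 1) w))
      (g := fun w => br (br (Finsupp.single p1 1) (Finsupp.single p2 1) (Finsupp.single p3 1))
          (Finsupp.single p4 1) w
        + br (Finsupp.single p3 1)
            (br (Finsupp.single p1 1) (Finsupp.single p2 1) (Finsupp.single p4 1)) w
        + br (Finsupp.single p3 1) (Finsupp.single p4 1)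
            (br (Finsupp.single p1 1) (Finsupp.single p2 1) w))
      (fun a b => by simp only [bra1, bra2, bra3]; try abel)
      (fun c a => by simp only [brs1, brs2, brs3, smul_add])
      (fun a b => by simp only [bra1, bra2, bra3]; try abel)
      (fun c a => by simp only [brs1, brs2, brs3, smul_add]) (fun p5 => ?_) w
  exact key' p1 p2 p3 p4 p5
end

section
/- The 3-Lie algebra A_ω^δ is generated as a 3-Lie algebra by the six elements L_{-1}, L_0, L_1, M_{-1}, M_0, M_1. In particular, for every positive integer n: L_n = [L_0, L_1, M_{n-1}], M_n = [L_{n-1}, M_1, M_0], L_{-n} = [L_{-1}, L_0, M_{-n+1}], M_{-n} = [L_{-n+1}, M_0, M_{-1}]. -/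
lemma br_LLM (r s t : ℤ) :
    br (Lb r) (Lb s) (Mb t) = ((s - r : ℤ) : ℂ) • Lb (r + s + t) := by
  show br (Finsupp.single (false, r) 1) (Finsupp.single (false, s) 1) (Finsupp.single (true, t) 1) = _
  simpa [sc] using br_single (false, r) (false, s) (true, t)

lemma br_LMM (r s t : ℤ) :
    br (Lb r) (Mb s) (Mb t) = ((s - t : ℤ) : ℂ) • Mb (r + s + t) := by
  show br (Finsupp.single (false, r) 1) (Finsupp.single (true, s) 1) (Finsupp.single (true, t) 1) = _
  simpa [sc] using br_single (false, r) (true, s) (true, t)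

/-- `A_ω^δ` is generated as a 3-Lie algebra by
`L_{-1}, L_0, L_1, M_{-1}, M_0, M_1`; in particular, for every positive `n`,
`L_n = [L_0,L_1,M_{n-1}]`, `M_n = [L_{n-1},M_1,M_0]`,
`L_{-n} = [L_{-1},L_0,M_{-n+1}]`, `M_{-n} = [L_{-n+1},M_0,M_{-1}]`. -/
theorem Aod_finitely_generated :
    (∀ p : Submodule ℂ Aod,
      Lb (-1) ∈ p → Lb 0 ∈ p → Lb 1 ∈ p → Mb (-1) ∈ p → Mb 0 ∈ p → Mb 1 ∈ p →
      (∀ x ∈ p, ∀ y ∈ p, ∀ z ∈ p, br x y z ∈ p) → p = ⊤) ∧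
    (∀ n : ℤ, 0 < n →
      br (Lb 0) (Lb 1) (Mb (n - 1)) = Lb n ∧
      br (Lb (n - 1)) (Mb 1) (Mb 0) = Mb n ∧
      br (Lb (-1)) (Lb 0) (Mb (-n + 1)) = Lb (-n) ∧
      br (Lb (-n + 1)) (Mb 0) (Mb (-1)) = Mb (-n)) := by
  constructor
  · intro p hLm1 hL0 hL1 hMm1 hM0 hM1 hbr
    have key : ∀ n : ℤ, Lb n ∈ p ∧ Mb n ∈ p := by
      intro n
      induction n using Int.induction_on with
      | zero => exact ⟨hL0, hM0⟩
      | succ n ih =>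
        constructor
        · have := hbr _ hL0 _ hL1 _ ih.2
          rw [br_LLM] at this
          simpa [add_comm, add_left_comm] using this
        · have := hbr _ ih.1 _ hM1 _ hM0
          rw [br_LMM] at this
          simpa [add_comm, add_left_comm] using this
      | pred n ih =>
        constructor
        · have := hbr _ hLm1 _ hL0 _ ih.2
          rw [br_LLM] at this
          simpa [sub_eq_add_neg, add_comm, add_left_comm] using this
        · have := hbr _ ih.1 _ hM0 _ hMm1
          rw [br_LMM] at this
          simpa [sub_eq_add_neg, add_comm, add_left_comm] using this
    rw [Submodule.eq_top_iff']
    intro x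
    induction x using Finsupp.induction with
    | zero => exact p.zero_mem
    | single_add a c f _ _ ih =>
      refine p.add_mem ?_ ih
      obtain ⟨b, r⟩ := a
      have : Finsupp.single ((b, r) : Bool × ℤ) c = c • Finsupp.single ((b, r) : Bool × ℤ) (1 : ℂ) := by
        rw [Finsupp.smul_single, smul_eq_mul, mul_one]
      rw [this]
      cases b
      · exact p.smul_mem c (key r).1
      · exact p.smul_mem c (key r).2
  · intro n _
    refine ⟨?_, ?_, ?_, ?_⟩
    · rw [br_LLM]; norm_num
    · rw [br_LMM]; norm_num
    · rw [br_LLM]; norm_num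
    · rw [br_LMM]; norm_num
end

section
/- Suppose (b_t)_{t∈ℤ} is a sequence of complex numbers satisfying −(s−t)b_r − (t−r)b_s + (s−r)b_t = 0 for all r, s, t ∈ ℤ, and additionally 3(s−r)b_{r+s+t} = (s+k−t)b_s − (r+k−t)b_r for all r, s, t ∈ ℤ and a fixed k ∈ ℤ. Then b_t = 0 for all t ∈ ℤ. -/
/-- If a complex sequence `(b_t)` satisfies
`-(s-t) b_r - (t-r) b_s + (s-r) b_t = 0` and
`3 (s-r) b_{r+s+t} = (s+k-t) b_s - (r+k-t) b_r` for all `r,s,t ∈ ℤ`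
(for a fixed `k ∈ ℤ`), then `b` is identically zero. -/
theorem b_sequence_vanishes (k : ℤ) (b : ℤ → ℂ)
    (h1 : ∀ r s t : ℤ,
      -((s - t : ℤ) : ℂ) * b r - ((t - r : ℤ) : ℂ) * b s + ((s - r : ℤ) : ℂ) * b t = 0)
    (h2 : ∀ r s t : ℤ,
      3 * ((s - r : ℤ) : ℂ) * b (r + s + t) =
        ((s + k - t : ℤ) : ℂ) * b s - ((r + k - t : ℤ) : ℂ) * b r) :
    ∀ t : ℤ, b t = 0 := by
  have hb : ∀ u : ℤ, b u = (1 - (u : ℂ)) * b 0 + (u : ℂ) * b 1 := by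
    intro u
    have h := h1 0 1 u
    push_cast at h
    linear_combination h
  have e1 := h2 0 1 k
  have e2 := h2 0 1 (k + 1)
  rw [hb (0 + 1 + k), hb (0 + 1 + (k + 1))] at *
  push_cast at e1 e2
  -- e1 : -3k b0 + (2+3k) b1 = 0 (after simplification), e2 similar
  have hb0 : b 0 = 0 := by linear_combination ((3 * (k : ℂ) + 6) * e1 - (3 * (k : ℂ) + 2) * e2) / 8
  have hb1 : b 1 = 0 := by linear_combination ((3 * (k : ℂ) + 4) * e1 - 3 * (k : ℂ) * e2) / 8
  intro t
  rw [hb t, hb0, hb1]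
  ring
end

section
/- Suppose (a_t)_{t∈ℤ} and (d_t)_{t∈ℤ} are complex sequences and k ∈ ℤ is fixed such that for all r,s,t ∈ ℤ: 3(s−r)a_{r+s+t} = (s−r−k)a_r + (s+k−r)a_s + (s−r)d_t, and 3(s−t)d_{r+s+t} = (s−t)a_r + (s+k−t)d_s + (s−t−k)d_t. Then both sequences are constant and equal: there exists α ∈ ℂ with a_t = d_t = α for all t ∈ ℤ. -/
/-- If complex sequences `(a_t)`, `(d_t)` satisfy, for a fixed `k ∈ ℤ`,
`3(s-r) a_{r+s+t} = (s-r-k) a_r + (s+k-r) a_s + (s-r) d_t` and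
`3(s-t) d_{r+s+t} = (s-t) a_r + (s+k-t) d_s + (s-t-k) d_t` for all `r,s,t ∈ ℤ`,
then both sequences are constant and equal. -/
theorem a_d_sequences_constant_and_equal (k : ℤ) (a d : ℤ → ℂ)
    (h1 : ∀ r s t : ℤ,
      3 * ((s - r : ℤ) : ℂ) * a (r + s + t) =
        ((s - r - k : ℤ) : ℂ) * a r + ((s + k - r : ℤ) : ℂ) * a s +
          ((s - r : ℤ) : ℂ) * d t)
    (h2 : ∀ r s t : ℤ,
      3 * ((s - t : ℤ) : ℂ) * d (r + s + t) =
        ((s - t : ℤ) : ℂ) * a r + ((s + k - t : ℤ) : ℂ) * d s +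
          ((s - t - k : ℤ) : ℂ) * d t) :
    ∃ α : ℂ, ∀ t : ℤ, a t = α ∧ d t = α := by
  have key : ∀ m : ℤ, a m = a 0 := by
    intro m
    have H1 := h1 0 1 (m - 1)
    rw [show (0:ℤ) + 1 + (m - 1) = m by ring] at H1
    have H2 := h1 1 2 (m - 1)
    rw [show (1:ℤ) + 2 + (m - 1) = m + 2 by ring] at H2
    have H3 := h2 m 1 0
    rw [show m + 1 + 0 = m + 1 by ring] at H3
    have H4 := h1 0 1 (m + 1)
    rw [show (0:ℤ) + 1 + (m + 1) = m + 2 by ring] at H4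
    have G1 := h1 0 1 (-1 : ℤ)
    rw [show (0:ℤ) + 1 + (-1) = 0 by ring] at G1
    have G2 := h1 1 2 (-1 : ℤ)
    rw [show (1:ℤ) + 2 + (-1) = 2 by ring] at G2
    have G3 := h2 0 1 0
    rw [show (0:ℤ) + 1 + 0 = 1 by ring] at G3
    have G4 := h1 0 1 (1 : ℤ)
    rw [show (0:ℤ) + 1 + 1 = 2 by ring] at G4
    push_cast at H1 H2 H3 H4 G1 G2 G3 G4
    linear_combination (1/8 : ℂ) *
      (H3 + 3 * H4 - 3 * H2 + 3 * H1 - (G3 + 3 * G4 - 3 * G2 + 3 * G1))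
  refine ⟨a 0, fun t => ⟨key t, ?_⟩⟩
  have E := h1 0 1 t
  rw [show (0:ℤ) + 1 + t = t + 1 by ring] at E
  push_cast at E
  linear_combination -E + 3 * key (t + 1) - (1 + (k:ℂ)) * key 1
end
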